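/- arXiv:2301.11294 — 2 statements merged into one kernel-verified Lean document; each statement's English description precedes it below -/
import Mathlib

section
/- Let f : ℝ^d → ℝ be convex, and suppose every subgradient g of f at every point satisfies ‖g‖ ≤ L. Let x_1 ∈ ℝ^d, let x* be a minimizer of f with x* ≠ x_1, and let T ≥ 1. If subgradient descent is run with the learning rate γ = ‖x_1 − x*‖ / (L √T), then the average iterate x̄_T = (1/T) Σ_{t=1}^T x_t satisfies f(x̄_T) − f(x*) ≤ L ‖x_1 − x*‖ / √T. -/
/-!
By the subgradient inequality, one step satisfies
`2γ (f x_t - f z) ≤ ‖x_t - z‖² - ‖x_{t+1} - z‖² + γ² L²`, which telescopes over `t = 1, …, T`;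
Jensen's inequality then bounds the average iterate by `‖x_1 - z‖² / (2γT) + γL²/2`, and the
ideal `γ` makes both terms equal to `L ‖x_1 - z‖ / (2√T)`. If `γ = 0` (that is, `L = 0` or
`x_1 = z`) the iterates are stationary and `L ‖x_1 - z‖ = 0` bounds the gap directly.
-/

open scoped RealInnerProductSpace
open Finset

lemma ConvexOn.map_inv_card_smul_sum_le {E ι : Type*} [AddCommGroup E] [Module ℝ E]
    {C : Set E} {f : E → ℝ} (hf : ConvexOn ℝ C f) {s : Finset ι} (hs : s.Nonempty) {p : ι → E}
    (hp : ∀ i ∈ s, p i ∈ C) :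
    f ((#s : ℝ)⁻¹ • ∑ i ∈ s, p i) ≤ (#s : ℝ)⁻¹ * ∑ i ∈ s, f (p i) := by
  have hcard : (#s : ℝ) ≠ 0 := by exact_mod_cast hs.card_ne_zero
  simpa [← smul_sum, ← mul_sum] using
    hf.map_sum_le (w := fun _ => (#s : ℝ)⁻¹) (fun _ _ => by positivity)
      (by simp [hcard]) hp

section
variable {E : Type*} [NormedAddCommGroup E] [InnerProductSpace ℝ E]

lemma norm_sub_smul_sub_sq (x g z : E) (γ : ℝ) :
    ‖x - γ • g - z‖ ^ 2 = ‖x - z‖ ^ 2 - 2 * γ * ⟪g, x - z⟫ + γ ^ 2 * ‖g‖ ^ 2 := by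
  rw [sub_right_comm, norm_sub_sq_real, real_inner_smul_right, real_inner_comm, norm_smul,
    mul_pow, Real.norm_eq_abs, sq_abs]
  ring

lemma subgradient_step_le {f : E → ℝ} {x g z : E} {γ : ℝ} (hγ : 0 ≤ γ)
    (hg : ⟪g, z - x⟫ ≤ f z - f x) :
    2 * γ * (f x - f z) ≤ ‖x - z‖ ^ 2 - ‖x - γ • g - z‖ ^ 2 + γ ^ 2 * ‖g‖ ^ 2 := by
  have hgx : ⟪g, z - x⟫ = -⟪g, x - z⟫ := by rw [← inner_neg_right, neg_sub]
  rw [norm_sub_smul_sub_sq]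
  nlinarith

lemma subgradient_descent_sum_le {f : E → ℝ} {x g : ℕ → E} {z : E} {L γ : ℝ} (hγ : 0 ≤ γ)
    (hL : ∀ t, 1 ≤ t → ‖g t‖ ≤ L)
    (hsub : ∀ t, 1 ≤ t → ⟪g t, z - x t⟫ ≤ f z - f (x t))
    (hiter : ∀ t, 1 ≤ t → x (t + 1) = x t - γ • g t) (T : ℕ) :
    2 * γ * ∑ t ∈ Icc 1 T, (f (x t) - f z) + ‖x (T + 1) - z‖ ^ 2 ≤
      ‖x 1 - z‖ ^ 2 + T * (γ ^ 2 * L ^ 2) := by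
  induction T with
  | zero => simp
  | succ T ih =>
    have hstep := subgradient_step_le hγ (hsub (T + 1) (by omega))
    have hgL : ‖g (T + 1)‖ ^ 2 ≤ L ^ 2 :=
      pow_le_pow_left₀ (norm_nonneg _) (hL (T + 1) (by omega)) 2
    rw [sum_Icc_succ_top (by omega), hiter (T + 1) (by omega)]
    push_cast
    nlinarith [sq_nonneg γ]

lemma subgradient_descent_average_sub_le {f : E → ℝ} (hf : ConvexOn ℝ Set.univ f)
    {x g : ℕ → E} {z : E} {L γ : ℝ} (hγ : 0 < γ)
    (hL : ∀ t, 1 ≤ t → ‖g t‖ ≤ L)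
    (hsub : ∀ t, 1 ≤ t → ⟪g t, z - x t⟫ ≤ f z - f (x t))
    (hiter : ∀ t, 1 ≤ t → x (t + 1) = x t - γ • g t) {T : ℕ} (hT : 1 ≤ T) :
    f ((1 / (T : ℝ)) • ∑ t ∈ Icc 1 T, x t) - f z ≤
      ‖x 1 - z‖ ^ 2 / (2 * γ * T) + γ * L ^ 2 / 2 := by
  have hT0 : (0 : ℝ) < T := by exact_mod_cast hT
  have hjensen : f ((1 / (T : ℝ)) • ∑ t ∈ Icc 1 T, x t) ≤ 1 / T * ∑ t ∈ Icc 1 T, f (x t) := by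
    simpa using hf.map_inv_card_smul_sum_le (s := Icc 1 T) (nonempty_Icc.2 hT) (p := x)
      (fun _ _ => Set.mem_univ _)
  have hsum := subgradient_descent_sum_le hγ.le hL hsub hiter T
  rw [sum_sub_distrib, sum_const, Nat.card_Icc, Nat.add_sub_cancel, nsmul_eq_mul] at hsum
  rw [div_add_div _ _ (by positivity) two_ne_zero, le_div_iff₀ (by positivity)]
  rw [one_div_mul_eq_div, le_div_iff₀ hT0] at hjensen
  nlinarith [sq_nonneg ‖x (T + 1) - z‖]

lemma subgradient_descent_average_sub_le_of_step_eq_zero {f : E → ℝ} {x g : ℕ → E} {z : E}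
    {L : ℝ} (hL : ‖g 1‖ ≤ L) (hsub : ⟪g 1, z - x 1⟫ ≤ f z - f (x 1))
    (hiter : ∀ t, 1 ≤ t → x (t + 1) = x t - (0 : ℝ) • g t) {T : ℕ} (hT : 1 ≤ T) :
    f ((1 / (T : ℝ)) • ∑ t ∈ Icc 1 T, x t) - f z ≤ L * ‖x 1 - z‖ := by
  have hconst : ∀ t, 1 ≤ t → x t = x 1 := fun t ht => by
    induction t, ht using Nat.le_induction with
    | base => rfl
    | succ t ht ih => rw [hiter t ht, zero_smul, sub_zero, ih]
  have havg : (1 / (T : ℝ)) • ∑ t ∈ Icc 1 T, x t = x 1 := by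
    rw [sum_congr rfl fun t ht => hconst t (mem_Icc.1 ht).1, sum_const, Nat.card_Icc,
      Nat.add_sub_cancel, ← Nat.cast_smul_eq_nsmul ℝ, smul_smul, one_div_mul_cancel (by positivity),
      one_smul]
  have hgx : ⟪g 1, z - x 1⟫ = -⟪g 1, x 1 - z⟫ := by rw [← inner_neg_right, neg_sub]
  calc f ((1 / (T : ℝ)) • ∑ t ∈ Icc 1 T, x t) - f z ≤ ⟪g 1, x 1 - z⟫ := by rw [havg]; linarith
    _ ≤ ‖g 1‖ * ‖x 1 - z‖ := real_inner_le_norm _ _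
    _ ≤ L * ‖x 1 - z‖ := by gcongr

end

theorem subgradient_descent_ideal_rate_general {d : ℕ}
    (f : EuclideanSpace ℝ (Fin d) → ℝ) (hf : ConvexOn ℝ Set.univ f)
    (L : ℝ)
    (hL : ∀ x g : EuclideanSpace ℝ (Fin d),
      (∀ z, ⟪g, z - x⟫ ≤ f z - f x) → ‖g‖ ≤ L)
    (x g : ℕ → EuclideanSpace ℝ (Fin d))
    (xstar : EuclideanSpace ℝ (Fin d))
    (T : ℕ) (hT : 1 ≤ T)
    (γ : ℝ) (hγ : γ = ‖x 1 - xstar‖ / (L * Real.sqrt T))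
    (hsub : ∀ t, 1 ≤ t → ∀ z, ⟪g t, z - x t⟫ ≤ f z - f (x t))
    (hiter : ∀ t, 1 ≤ t → x (t + 1) = x t - γ • g t) :
    f ((1 / (T : ℝ)) • ∑ t ∈ Finset.Icc 1 T, x t) - f xstar ≤
      L * ‖x 1 - xstar‖ / Real.sqrt T := by
  have hgL : ∀ t, 1 ≤ t → ‖g t‖ ≤ L := fun t ht => hL _ _ (hsub t ht)
  have hsqrtT : 0 < Real.sqrt T := Real.sqrt_pos.2 (by exact_mod_cast hT)
  have hγ0 : 0 ≤ γ := hγ ▸ div_nonneg (norm_nonneg _)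
    (mul_nonneg ((norm_nonneg _).trans (hgL 1 le_rfl)) hsqrtT.le)
  rcases hγ0.eq_or_lt with hγ0 | hγpos
  · subst hγ0
    have hLR : L * ‖x 1 - xstar‖ = 0 := by
      rcases div_eq_zero_iff.1 hγ.symm with hR | hL0
      · rw [hR, mul_zero]
      · rw [(mul_eq_zero.1 hL0).resolve_right hsqrtT.ne', zero_mul]
    rw [hLR, zero_div, ← hLR]
    exact subgradient_descent_average_sub_le_of_step_eq_zero (hgL 1 le_rfl) (hsub 1 le_rfl xstar)
      hiter hT
  · have hL0 : L ≠ 0 := by rintro rfl; simp [hγ] at hγpos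
    have hR0 : ‖x 1 - xstar‖ ≠ 0 := by intro h; simp [hγ, h] at hγpos
    refine (subgradient_descent_average_sub_le hf hγpos hgL (fun t ht => hsub t ht xstar)
      hiter hT).trans_eq ?_
    rw [hγ]
    field_simp
    rw [Real.sq_sqrt (Nat.cast_nonneg T)]
    ring

/-- **Subgradient descent with the ideal learning rate (eq. (8) of the paper).**
For convex `f : ℝ^d → ℝ` whose subgradients are all bounded in norm by `L`, running
subgradient descent with `γ = ‖x₁ - x*‖/(L√T)` yields
`f(x̄_T) - f(x*) ≤ L‖x₁ - x*‖/√T`. -/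
theorem subgradient_descent_ideal_rate {d : ℕ}
    (f : EuclideanSpace ℝ (Fin d) → ℝ) (hf : ConvexOn ℝ Set.univ f)
    (L : ℝ)
    (hL : ∀ x g : EuclideanSpace ℝ (Fin d),
      (∀ z, ⟪g, z - x⟫ ≤ f z - f x) → ‖g‖ ≤ L)
    (x g : ℕ → EuclideanSpace ℝ (Fin d))
    (xstar : EuclideanSpace ℝ (Fin d)) (hmin : ∀ y, f xstar ≤ f y)
    (hne : xstar ≠ x 1)
    (T : ℕ) (hT : 1 ≤ T)
    (γ : ℝ) (hγ : γ = ‖x 1 - xstar‖ / (L * Real.sqrt T))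
    (hsub : ∀ t, 1 ≤ t → ∀ z, ⟪g t, z - x t⟫ ≤ f z - f (x t))
    (hiter : ∀ t, 1 ≤ t → x (t + 1) = x t - γ • g t) :
    f ((1 / (T : ℝ)) • ∑ t ∈ Finset.Icc 1 T, x t) - f xstar ≤
      L * ‖x 1 - xstar‖ / Real.sqrt T :=
  subgradient_descent_ideal_rate_general f hf L hL x g xstar T hT γ hγ hsub hiter
end

section
/- There exists a universal constant K > 0 such that the following holds. Let f : ℝ → ℝ be convex with a minimizer x*, and suppose every subgradient of f at every point lies in [−1, 1]. Let ε > 0 and T ≥ 1. Define the KT coin-betting iterates by x_t = (−Σ_{i=1}^{t−1} g_i / t) · (ε − Σ_{i=1}^{t−1} g_i x_i), where g_i is a subgradient of f at x_i. Then the average iterate x̄_T = (1/T) Σ_{t=1}^T x_t satisfies f(x̄_T) − f(x*) ≤ K · (|x*| · √(ln(1 + 24 T² (x*)² / ε²)) + ε) / √T. -/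
/-!
Write `c t = -g t`. The iterates are then the bets of the Krichevsky–Trofimov bettor on the
coin outcomes `c t ∈ [-1, 1]`, and with `S = ∑ c t` its wealth `W T = ε + ∑ c t * x t` satisfies
`W T ≥ ε / 2 * exp (T * klHalf (S / T)) / √T`, where `klHalf a` is the divergence of a coin of
bias `(1 + a) / 2` from a fair one. Each step of this induction combines the convexity of
`klHalf` in the outcome with two Stirling-type estimates for `x log x`. Since
`klHalf a ≥ a² / 8`, the wealth is exponential in `S² / T`, which dominates the linear payoff
`S * u` against any comparator `u` up to the logarithmic term of the bound. Finally, Jensen's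
inequality and the subgradient inequality give
`T (f x̄ - f u) ≤ ∑ g t * (x t - u) = ε - W T + S * u`.
-/

open Real Finset

lemma mul_log_div (x : ℝ) {y : ℝ} (hy : y ≠ 0) : x * log (x / y) = x * (log x - log y) := by
  rcases eq_or_ne x 0 with rfl | hx
  · simp
  · rw [log_div hx hy]

lemma two_mul_sub_two_mul_le_sq_mul_log_sq {v : ℝ} (hv : 0 ≤ v) :
    2 * v ^ 2 - 2 * v ≤ v ^ 2 * log (v ^ 2) := by
  rcases hv.eq_or_lt with rfl | hv
  · simp
  have h := one_sub_inv_le_log_of_pos hv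
  rw [log_pow, Nat.cast_ofNat]
  have : v ^ 2 * (1 - v⁻¹) = v ^ 2 - v := by field_simp
  nlinarith

lemma two_mul_le_log_sub_log {u : ℝ} (h₀ : 0 ≤ u) (h₁ : u < 1) :
    2 * u ≤ log (1 + u) - log (1 - u) := by
  have hs := hasSum_log_sub_log_of_abs_lt_one (x := u) (by rwa [abs_of_nonneg h₀])
  simpa using le_hasSum hs 0 fun k _ => by positivity

lemma mul_log_one_add_sub_mul_log_one_sub_le {u : ℝ} (h₀ : 0 ≤ u) (h₁ : u ≤ 1) :
    (1 + u) * log (1 + u) - (1 - u) * log (1 - u) ≤ 2 * u := by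
  let φ : ℝ → ℝ := fun v => 2 * v - ((1 + v) * log (1 + v) - (1 - v) * log (1 - v))
  have hcont : ContinuousOn φ (Set.Icc 0 1) :=
    ((continuous_const_mul 2).sub ((continuous_mul_log.comp (by fun_prop)).sub
      (continuous_mul_log.comp (by fun_prop)))).continuousOn
  have hderiv : ∀ v ∈ Set.Ioo (0 : ℝ) 1, HasDerivAt φ (-(log (1 + v) + log (1 - v))) v := by
    intro v ⟨hv₀, hv₁⟩
    have hp := (hasDerivAt_mul_log (by linarith : 1 + v ≠ 0)).comp v ((hasDerivAt_id v).const_add 1)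
    have hm := (hasDerivAt_mul_log (by linarith : 1 - v ≠ 0)).comp v ((hasDerivAt_id v).const_sub 1)
    exact (((hasDerivAt_id v).const_mul 2).sub (hp.sub hm)).congr_deriv (by ring)
  have hmono : MonotoneOn φ (Set.Icc 0 1) := by
    refine monotoneOn_of_hasDerivWithinAt_nonneg (f' := fun v => -(log (1 + v) + log (1 - v)))
      (convex_Icc 0 1) hcont ?_ ?_ <;>
      rw [interior_Icc] <;> intro v hv
    · exact (hderiv v hv).hasDerivWithinAt
    · rw [neg_nonneg, ← log_mul (by linarith [hv.1]) (by linarith [hv.2])]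
      exact log_nonpos (by nlinarith [hv.1, hv.2]) (by nlinarith [hv.1, hv.2])
  have := hmono ⟨le_rfl, zero_le_one⟩ ⟨h₀, h₁⟩ h₀
  norm_num [φ] at this
  linarith

lemma mul_log_add_one_sub_mul_log_sub_one_le {q : ℝ} (hq : 1 ≤ q) :
    (q + 1) * log (q + 1) - (q - 1) * log (q - 1) ≤ 2 * (1 + log q) := by
  have hq₀ : q ≠ 0 := by positivity
  have h := mul_log_one_add_sub_mul_log_one_sub_le (inv_nonneg.2 (zero_le_one.trans hq))
    (inv_le_one_of_one_le₀ hq)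
  have e₁ : q * ((1 + q⁻¹) * log (1 + q⁻¹)) = (q + 1) * (log (q + 1) - log q) := by
    rw [← mul_log_div _ hq₀, show 1 + q⁻¹ = (q + 1) / q by field_simp]
    field_simp
  have e₂ : q * ((1 - q⁻¹) * log (1 - q⁻¹)) = (q - 1) * (log (q - 1) - log q) := by
    rw [← mul_log_div _ hq₀, show 1 - q⁻¹ = (q - 1) / q by field_simp]
    field_simp
  have := mul_le_mul_of_nonneg_left h (by positivity : 0 ≤ q)
  rw [mul_sub, e₁, e₂, mul_comm 2, ← mul_assoc, mul_inv_cancel₀ hq₀] at this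
  linarith

lemma two_le_mul_log_sub_log {t : ℝ} (ht : 1 < t) :
    2 ≤ (2 * t - 1) * (log t - log (t - 1)) := by
  have ht' : 0 < 2 * t - 1 := by linarith
  have hu₁ : (2 * t - 1)⁻¹ < 1 := inv_lt_one_of_one_lt₀ (by linarith)
  have e : log t - log (t - 1) = log (1 + (2 * t - 1)⁻¹) - log (1 - (2 * t - 1)⁻¹) := by
    rw [← log_div (by linarith) (by linarith), ← log_div (by positivity) (by linarith)]
    rw [show 1 + (2 * t - 1)⁻¹ = 2 * t / (2 * t - 1) by field_simp; ring,
      show 1 - (2 * t - 1)⁻¹ = 2 * (t - 1) / (2 * t - 1) by field_simp; ring]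
    rw [div_div_div_cancel_right₀ ht'.ne', mul_div_mul_left _ _ two_ne_zero]
  calc 2 = (2 * t - 1) * (2 * (2 * t - 1)⁻¹) := by field_simp
    _ ≤ (2 * t - 1) * (log t - log (t - 1)) := by
      rw [e]
      exact mul_le_mul_of_nonneg_left (two_mul_le_log_sub_log (by positivity) hu₁) ht'.le

-- `klHalf a` is the Kullback–Leibler divergence of a coin of bias `(1 + a) / 2` from a fair coin.
noncomputable def klHalf (a : ℝ) : ℝ := log 2 - binEntropy ((1 + a) / 2)

lemma klHalf_eq (a : ℝ) :
    klHalf a = (1 + a) / 2 * log (1 + a) + (1 - a) / 2 * log (1 - a) := by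
  have h₁ := mul_log_div (1 + a) two_ne_zero
  have h₂ := mul_log_div (1 - a) two_ne_zero
  rw [klHalf, binEntropy, log_inv, log_inv, show 1 - (1 + a) / 2 = (1 - a) / 2 by ring]
  linear_combination (h₁ + h₂) / 2

lemma klHalf_neg (a : ℝ) : klHalf (-a) = klHalf a := by
  rw [klHalf, klHalf, ← binEntropy_one_sub]
  ring_nf

lemma klHalf_le_log_two {a : ℝ} (ha : |a| ≤ 1) : klHalf a ≤ log 2 := by
  obtain ⟨h₁, h₂⟩ := abs_le.mp ha
  exact sub_le_self _ (binEntropy_nonneg (by linarith) (by linarith))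

lemma convexOn_klHalf : ConvexOn ℝ (Set.Icc (-1) 1) klHalf := by
  refine ⟨convex_Icc _ _, fun x ⟨hx₁, hx₂⟩ y ⟨hy₁, hy₂⟩ a b ha hb hab => ?_⟩
  have h := strictConcave_binEntropy.concaveOn.2 (x := (1 + x) / 2) (y := (1 + y) / 2)
    ⟨by linarith, by linarith⟩ ⟨by linarith, by linarith⟩ ha hb hab
  simp only [smul_eq_mul, klHalf] at h ⊢
  rw [show (1 + (a * x + b * y)) / 2 = a * ((1 + x) / 2) + b * ((1 + y) / 2) by
    linear_combination -hab / 2]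
  linear_combination h - log 2 * hab

lemma sq_div_eight_le_klHalf_of_nonneg {a : ℝ} (h₀ : 0 ≤ a) (h₁ : a ≤ 1) :
    a ^ 2 / 8 ≤ klHalf a := by
  have hplus : a ≤ (1 + a) * log (1 + a) := by
    have h := one_sub_inv_le_log_of_pos (show 0 < 1 + a by linarith)
    have : (1 + a) * (1 - (1 + a)⁻¹) = a := by field_simp; ring
    nlinarith
  set v := √(1 - a)
  have hv : v ^ 2 = 1 - a := sq_sqrt (by linarith)
  have hv₀ : 0 ≤ v := sqrt_nonneg _
  have hminus := two_mul_sub_two_mul_le_sq_mul_log_sq hv₀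
  rw [hv] at hminus
  have hv₁ : v ≤ 1 := by nlinarith
  -- with `a = 1 - v²`, the bound reads `(1 - v)² (1 + v)² / 4 ≤ (1 - v)²`
  have : a ^ 2 / 4 ≤ a + (2 * (1 - a) - 2 * v) := by
    rw [show a = 1 - v ^ 2 by linarith]
    nlinarith [mul_nonneg (sq_nonneg (1 - v)) (mul_nonneg hv₀ (sub_nonneg.2 hv₁))]
  rw [klHalf_eq]
  linarith

lemma sq_div_eight_le_klHalf {a : ℝ} (ha : |a| ≤ 1) : a ^ 2 / 8 ≤ klHalf a := by
  rcases le_total 0 a with h | h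
  · exact sq_div_eight_le_klHalf_of_nonneg h (le_of_abs_le ha)
  · simpa [klHalf_neg] using
      sq_div_eight_le_klHalf_of_nonneg (neg_nonneg.2 h) (by linarith [neg_abs_le a])

lemma mul_klHalf_div {y : ℝ} (hy : y ≠ 0) (b : ℝ) :
    y * klHalf (b / y) =
      (y + b) / 2 * (log (y + b) - log y) + (y - b) / 2 * (log (y - b) - log y) := by
  rw [klHalf_eq, show 1 + b / y = (y + b) / y by field_simp,
    show 1 - b / y = (y - b) / y by field_simp]
  have h₁ := mul_log_div (y + b) hy
  have h₂ := mul_log_div (y - b) hy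
  field_simp
  linear_combination h₁ + h₂

lemma mul_klHalf_add_one_div_le {τ s : ℝ} (hτ : 1 < τ) (hs : |s| ≤ τ - 1) :
    τ * klHalf ((s + 1) / τ) ≤
      log ((τ + s) / τ) + (τ - 1) * klHalf (s / (τ - 1)) + (log τ - log (τ - 1)) / 2 := by
  obtain ⟨hs₁, -⟩ := abs_le.mp hs
  have hA := mul_log_add_one_sub_mul_log_sub_one_le (q := τ + s) (by linarith)
  have hB := two_le_mul_log_sub_log hτ
  -- expanded, the claim is `hA` at `q = τ + s` chained with `hB` through the constant `2`
  rw [mul_klHalf_div (by positivity) (s + 1), mul_klHalf_div (by linarith) s,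
    log_div (by linarith) (by positivity)]
  rw [show τ + (s + 1) = τ + s + 1 by ring, show τ - (s + 1) = τ - 1 - s by ring,
    show τ - 1 + s = τ + s - 1 by ring]
  linarith

lemma one_add_mul_div_pos {τ s c : ℝ} (hτ : 0 < τ) (hs : |s| < τ) (hc : |c| ≤ 1) :
    0 < 1 + c * s / τ := by
  have h : |c * s / τ| < 1 := by
    rw [abs_div, abs_of_pos hτ, div_lt_one hτ, abs_mul]
    nlinarith [abs_nonneg c, abs_nonneg s]
  linarith [neg_abs_le (c * s / τ)]

lemma mul_klHalf_add_div_le {τ s c : ℝ} (hτ : 1 < τ) (hs : |s| ≤ τ - 1) (hc : |c| ≤ 1) :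
    τ * klHalf ((s + c) / τ) ≤
      log (1 + c * s / τ) + (τ - 1) * klHalf (s / (τ - 1)) + (log τ - log (τ - 1)) / 2 := by
  obtain ⟨hs₁, hs₂⟩ := abs_le.mp hs
  obtain ⟨hc₁, hc₂⟩ := abs_le.mp hc
  have hτ₀ : 0 < τ := by linarith
  set R := (τ - 1) * klHalf (s / (τ - 1)) + (log τ - log (τ - 1)) / 2 with hR
  -- `(s + c) / τ` is the mean of `(s ± 1) / τ` under the weights `(1 ± c) / 2`
  have hkl : klHalf ((s + c) / τ) ≤
      (1 + c) / 2 * klHalf ((s + 1) / τ) + (1 - c) / 2 * klHalf ((s - 1) / τ) := by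
    have h := convexOn_klHalf.2 (x := (s + 1) / τ) (y := (s - 1) / τ)
      ⟨by rw [le_div_iff₀ hτ₀]; linarith, by rw [div_le_one hτ₀]; linarith⟩
      ⟨by rw [le_div_iff₀ hτ₀]; linarith, by rw [div_le_one hτ₀]; linarith⟩
      (by linarith : 0 ≤ (1 + c) / 2) (by linarith : 0 ≤ (1 - c) / 2) (by ring)
    rwa [smul_eq_mul, smul_eq_mul, show (1 + c) / 2 * ((s + 1) / τ) + (1 - c) / 2 * ((s - 1) / τ)
      = (s + c) / τ by ring] at h
  have hplus : τ * klHalf ((s + 1) / τ) ≤ log ((τ + s) / τ) + R := by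
    rw [hR, ← add_assoc]
    exact mul_klHalf_add_one_div_le hτ hs
  have hminus : τ * klHalf ((s - 1) / τ) ≤ log ((τ - s) / τ) + R := by
    have h := mul_klHalf_add_one_div_le hτ (s := -s) (by rwa [abs_neg])
    rwa [show (-s + 1) / τ = -((s - 1) / τ) by ring, klHalf_neg, neg_div, klHalf_neg,
      ← sub_eq_add_neg, add_assoc] at h
  have hlog : (1 + c) / 2 * log ((τ + s) / τ) + (1 - c) / 2 * log ((τ - s) / τ) ≤
      log (1 + c * s / τ) := by
    have h := strictConcaveOn_log_Ioi.concaveOn.2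
      (show (τ + s) / τ ∈ Set.Ioi 0 from div_pos (by linarith) hτ₀)
      (show (τ - s) / τ ∈ Set.Ioi 0 from div_pos (by linarith) hτ₀)
      (by linarith : 0 ≤ (1 + c) / 2) (by linarith : 0 ≤ (1 - c) / 2) (by ring)
    rwa [smul_eq_mul, smul_eq_mul, smul_eq_mul, smul_eq_mul,
      show (1 + c) / 2 * ((τ + s) / τ) + (1 - c) / 2 * ((τ - s) / τ) = 1 + c * s / τ by
        field_simp; ring] at h
  calc τ * klHalf ((s + c) / τ)
      ≤ (1 + c) / 2 * (τ * klHalf ((s + 1) / τ)) + (1 - c) / 2 * (τ * klHalf ((s - 1) / τ)) := by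
        linarith [mul_le_mul_of_nonneg_left hkl hτ₀.le]
    _ ≤ (1 + c) / 2 * (log ((τ + s) / τ) + R) + (1 - c) / 2 * (log ((τ - s) / τ) + R) := by
        gcongr
        linarith
    _ ≤ log (1 + c * s / τ) + R := by linarith
    _ = _ := by rw [hR, add_assoc]

namespace KT

-- The value `2` at `t = 0` makes `ε / 2 * potential 0 0` the initial wealth `ε`.
noncomputable def potential (t : ℕ) (s : ℝ) : ℝ :=
  if t = 0 then 2 else exp (t * klHalf (s / t)) / √t

lemma potential_succ_le {t : ℕ} {s c : ℝ} (hs : |s| ≤ t) (hc : |c| ≤ 1) :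
    potential (t + 1) (s + c) ≤ (1 + c * s / (t + 1)) * potential t s := by
  rcases Nat.eq_zero_or_pos t with rfl | ht
  · obtain rfl : s = 0 := abs_nonpos_iff.mp (by simpa using hs)
    simpa [potential, ← le_log_iff_exp_le] using klHalf_le_log_two hc
  have htR : (1 : ℝ) ≤ t := by exact_mod_cast ht
  have h := mul_klHalf_add_div_le (τ := t + 1) (by linarith) (by simpa using hs) hc
  rw [add_sub_cancel_right] at h
  have hpos := one_add_mul_div_pos (τ := t + 1) (s := s) (by positivity) (by linarith) hc
  have hsqrt : exp ((log (t + 1) - log t) / 2) = √(t + 1) / √t := by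
    rw [exp_half, exp_sub, exp_log (by positivity), exp_log (by positivity),
      sqrt_div' _ (by positivity)]
  rw [potential, potential, if_neg (by omega), if_neg ht.ne', div_le_iff₀ (by positivity)]
  calc exp ((↑(t + 1) : ℝ) * klHalf ((s + c) / ↑(t + 1)))
      ≤ exp (log (1 + c * s / (t + 1)) + t * klHalf (s / t) + (log (t + 1) - log t) / 2) := by
        push_cast
        exact exp_le_exp.mpr h
    _ = (1 + c * s / (t + 1)) * (exp (t * klHalf (s / t)) / √t) * √(↑(t + 1) : ℝ) := by
        rw [exp_add, exp_add, exp_log hpos, hsqrt]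
        push_cast
        field_simp

lemma exp_sq_div_le_potential {t : ℕ} (ht : t ≠ 0) {s : ℝ} (hs : |s| ≤ t) :
    exp (s ^ 2 / (8 * t)) / √t ≤ potential t s := by
  have htR : (0 : ℝ) < t := by exact_mod_cast Nat.pos_of_ne_zero ht
  rw [potential, if_neg ht]
  gcongr
  calc s ^ 2 / (8 * t) = t * ((s / t) ^ 2 / 8) := by field_simp
    _ ≤ t * klHalf (s / t) := by
      gcongr
      exact sq_div_eight_le_klHalf (by rwa [abs_div, abs_of_pos htR, div_le_one htR])

def coinSum (c : ℕ → ℝ) (t : ℕ) : ℝ := ∑ i ∈ Icc 1 t, c i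

def wealth (ε : ℝ) (c x : ℕ → ℝ) (t : ℕ) : ℝ := ε + ∑ i ∈ Icc 1 t, c i * x i

lemma coinSum_succ (c : ℕ → ℝ) (t : ℕ) : coinSum c (t + 1) = coinSum c t + c (t + 1) :=
  sum_Icc_succ_top (by omega) c

lemma wealth_succ (ε : ℝ) (c x : ℕ → ℝ) (t : ℕ) :
    wealth ε c x (t + 1) = wealth ε c x t + c (t + 1) * x (t + 1) := by
  rw [wealth, wealth, sum_Icc_succ_top (by omega), add_assoc]

lemma abs_coinSum_le {c : ℕ → ℝ} {T : ℕ} (hc : ∀ t ∈ Icc 1 T, |c t| ≤ 1) :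
    |coinSum c T| ≤ T := by
  calc |coinSum c T| ≤ ∑ i ∈ Icc 1 T, |c i| := abs_sum_le_sum_abs _ _
    _ ≤ #(Icc 1 T) • (1 : ℝ) := sum_le_card_nsmul _ _ _ hc
    _ = T := by simp

theorem half_mul_potential_le_wealth {ε : ℝ} (hε : 0 ≤ ε) {c x : ℕ → ℝ} :
    ∀ {T : ℕ}, (∀ t ∈ Icc 1 T, |c t| ≤ 1) →
      (∀ t ∈ Icc 1 T, x t = coinSum c (t - 1) / t * wealth ε c x (t - 1)) →
      ε / 2 * potential T (coinSum c T) ≤ wealth ε c x T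
  | 0, _, _ => by simp [potential, wealth]
  | T + 1, hc, hx => by
    have hsub : Icc 1 T ⊆ Icc 1 (T + 1) := Icc_subset_Icc_right (by omega)
    have hT : T + 1 ∈ Icc 1 (T + 1) := by simp
    have ih := half_mul_potential_le_wealth hε (fun t ht => hc t (hsub ht))
      (fun t ht => hx t (hsub ht))
    have hS := abs_coinSum_le fun t ht => hc t (hsub ht)
    have hpos := one_add_mul_div_pos (τ := T + 1) (by positivity) (by linarith) (hc _ hT)
    calc ε / 2 * potential (T + 1) (coinSum c (T + 1))
        ≤ ε / 2 * ((1 + c (T + 1) * coinSum c T / (T + 1)) * potential T (coinSum c T)) := by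
          rw [coinSum_succ]
          gcongr
          exact potential_succ_le hS (hc _ hT)
      _ ≤ (1 + c (T + 1) * coinSum c T / (T + 1)) * wealth ε c x T := by
          rw [mul_left_comm]
          gcongr
      _ = wealth ε c x (T + 1) := by
          rw [wealth_succ, hx _ hT, add_tsub_cancel_right]
          push_cast
          ring

end KT

theorem ConvexOn.map_average_sub_le {ι : Type*} {s : Finset ι} (hs : s.Nonempty) {f : ℝ → ℝ}
    (hf : ConvexOn ℝ Set.univ f) {x g : ι → ℝ}
    (hg : ∀ i ∈ s, ∀ z, g i * (z - x i) ≤ f z - f (x i)) (u : ℝ) :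
    f (1 / #s * ∑ i ∈ s, x i) - f u ≤ 1 / #s * ∑ i ∈ s, g i * (x i - u) := by
  have hn : (0 : ℝ) < #s := by exact_mod_cast hs.card_pos
  have hjensen : f (∑ i ∈ s, (1 / #s : ℝ) • x i) ≤ ∑ i ∈ s, (1 / #s : ℝ) • f (x i) :=
    hf.map_sum_le (fun _ _ => by positivity) (by simp [hn.ne']) fun _ _ => trivial
  simp only [smul_eq_mul, ← mul_sum] at hjensen
  have hlin : ∑ i ∈ s, f (x i) - #s * f u ≤ ∑ i ∈ s, g i * (x i - u) := by
    rw [← nsmul_eq_mul, ← sum_const, ← sum_sub_distrib]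
    exact sum_le_sum fun i hi => by linarith [hg i hi u]
  calc f (1 / #s * ∑ i ∈ s, x i) - f u ≤ 1 / #s * (∑ i ∈ s, f (x i) - #s * f u) := by
        rw [mul_sub, ← mul_assoc, one_div_mul_cancel hn.ne', one_mul]
        linarith
    _ ≤ 1 / #s * ∑ i ∈ s, g i * (x i - u) := by gcongr

lemma abs_mul_abs_le_of_exp_le {ε T S W u : ℝ} (hε : 0 < ε) (hT : 0 < T) (hS : |S| ≤ T)
    (hW : ε / 2 * (exp (S ^ 2 / (8 * T)) / √T) ≤ W)
    (hSL : 16 * (T * log (1 + 24 * T ^ 2 * u ^ 2 / ε ^ 2)) ≤ S ^ 2) (hu : ε ≤ |u| * √T) :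
    |S| * |u| ≤ W := by
  set A := 24 * T ^ 2 * u ^ 2 / ε ^ 2
  have hr : √T * √T = T := mul_self_sqrt hT.le
  have hexp : 4 * A ≤ exp (S ^ 2 / (8 * T)) :=
    calc 4 * A ≤ (1 + A) ^ 2 := by nlinarith [sq_nonneg (1 - A)]
      _ = exp (2 * log (1 + A)) := by
        rw [mul_comm, exp_mul, exp_log (by positivity)]
        norm_cast
      _ ≤ exp (S ^ 2 / (8 * T)) := by
        gcongr
        rw [le_div_iff₀ (by positivity)]
        linarith
  calc |S| * |u| ≤ 48 * T ^ 2 * u ^ 2 / (ε * √T) := by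
        rw [le_div_iff₀ (by positivity)]
        calc |S| * |u| * (ε * √T) ≤ T * |u| * (|u| * √T * √T) := by gcongr
          _ = T ^ 2 * u ^ 2 := by rw [mul_assoc |u|, hr, ← sq_abs u]; ring
          _ ≤ 48 * T ^ 2 * u ^ 2 := by nlinarith [sq_nonneg (T * u)]
    _ = ε / 2 * (4 * A / √T) := by
        simp only [A]
        field_simp
        ring
    _ ≤ W := le_trans (by gcongr) hW

lemma sub_add_mul_le_of_exp_le {ε T S W : ℝ} (hε : 0 < ε) (hT : 1 ≤ T) (hS : |S| ≤ T)
    (hW : ε / 2 * (exp (S ^ 2 / (8 * T)) / √T) ≤ W) (u : ℝ) :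
    ε - W + S * u ≤ 4 * |u| * √(T * log (1 + 24 * T ^ 2 * u ^ 2 / ε ^ 2)) + 2 * ε * √T := by
  set L := log (1 + 24 * T ^ 2 * u ^ 2 / ε ^ 2)
  have hL : 0 ≤ L := log_nonneg (le_add_of_nonneg_right (by positivity))
  have hT₀ : 0 < T := by linarith
  have hr : √T * √T = T := mul_self_sqrt hT₀.le
  have hW₀ : 0 < W := lt_of_lt_of_le (by positivity) hW
  have hSu : S * u ≤ |S| * |u| := by rw [← abs_mul]; exact le_abs_self _
  have hεr : ε ≤ ε * √T := le_mul_of_one_le_right hε.le (one_le_sqrt.mpr hT)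
  have hlog : 0 ≤ 4 * |u| * √(T * L) := by positivity
  suffices h : |S| * |u| ≤ 4 * |u| * √(T * L) + ε * √T + W by linarith
  rcases le_or_gt |S| (4 * √(T * L)) with hsmall | hlarge
  · have : |S| * |u| ≤ 4 * |u| * √(T * L) := by
      rw [mul_right_comm]
      gcongr
    linarith [(by positivity : 0 ≤ ε * √T)]
  rcases le_or_gt (|u| * √T) ε with hu | hu
  · have : |S| * |u| ≤ ε * √T :=
      calc |S| * |u| ≤ T * |u| := by gcongr
        _ = √T * (|u| * √T) := by rw [mul_comm |u|, ← mul_assoc, hr]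
        _ ≤ ε * √T := by rw [mul_comm ε]; gcongr
    linarith
  have hSL : 16 * (T * L) ≤ S ^ 2 := by
    have := mul_self_le_mul_self (by positivity) hlarge.le
    rw [mul_mul_mul_comm, mul_self_sqrt (by positivity), abs_mul_abs_self] at this
    linarith
  linarith [abs_mul_abs_le_of_exp_le hε hT₀ hS hW hSL hu.le, (by positivity : 0 ≤ ε * √T)]

/-- **Convergence of KT coin-betting optimisation (Corollary 5 of Orabona & Pál /
eq. (16) of the paper).** There is a universal constant `K > 0` such that, for any convex
`f : ℝ → ℝ` with all subgradients in `[-1,1]`, a minimizer `x*`, initial wealth `ε > 0`,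
and KT iterates `xₜ = (-∑_{i<t} gᵢ / t)(ε - ∑_{i<t} gᵢ xᵢ)` with `gᵢ ∈ ∂f(xᵢ)`, the
average iterate satisfies
`f(x̄_T) - f(x*) ≤ K (|x*| √(ln(1 + 24T²(x*)²/ε²)) + ε)/√T`. -/
theorem kt_coin_betting_convergence :
    ∃ K : ℝ, 0 < K ∧
      ∀ (f : ℝ → ℝ), ConvexOn ℝ Set.univ f →
      ∀ xstar : ℝ, (∀ y, f xstar ≤ f y) →
      (∀ x g : ℝ, (∀ z : ℝ, g * (z - x) ≤ f z - f x) → g ∈ Set.Icc (-1 : ℝ) 1) →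
      ∀ ε : ℝ, 0 < ε →
      ∀ T : ℕ, 1 ≤ T →
      ∀ x g : ℕ → ℝ,
        (∀ t ∈ Finset.Icc 1 T, ∀ z : ℝ, g t * (z - x t) ≤ f z - f (x t)) →
        (∀ t ∈ Finset.Icc 1 T,
          x t = (-(∑ i ∈ Finset.Icc 1 (t - 1), g i) / (t : ℝ)) *
                  (ε - ∑ i ∈ Finset.Icc 1 (t - 1), g i * x i)) →
        f ((1 / (T : ℝ)) * ∑ t ∈ Finset.Icc 1 T, x t) - f xstar ≤
          K * (|xstar| * Real.sqrt (Real.log (1 + 24 * (T : ℝ) ^ 2 * xstar ^ 2 / ε ^ 2)) + ε) /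
            Real.sqrt T := by
  refine ⟨4, by norm_num, fun f hf xstar _ hbdd ε hε T hT x g hg hx => ?_⟩
  let c : ℕ → ℝ := fun i => -g i
  have hc : ∀ t ∈ Icc 1 T, |c t| ≤ 1 := fun t ht => by
    obtain ⟨h₁, h₂⟩ := hbdd _ _ (hg t ht)
    exact abs_le.mpr ⟨by linarith, by linarith⟩
  have hcoin : ∀ t, KT.coinSum c t = -∑ i ∈ Icc 1 t, g i := fun t => by
    simp [KT.coinSum, c, sum_neg_distrib]
  have hwealth : ∀ t, KT.wealth ε c x t = ε - ∑ i ∈ Icc 1 t, g i * x i := fun t => by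
    simp [KT.wealth, c, sub_eq_add_neg]
  have hbet : ∀ t ∈ Icc 1 T, x t = KT.coinSum c (t - 1) / t * KT.wealth ε c x (t - 1) :=
    fun t ht => by rw [hx t ht, hcoin, hwealth]
  have hW := (mul_le_mul_of_nonneg_left (KT.exp_sq_div_le_potential (by omega)
    (KT.abs_coinSum_le hc)) (by positivity : 0 ≤ ε / 2)).trans
    (KT.half_mul_potential_le_wealth hε.le hc hbet)
  have hregret : ∑ t ∈ Icc 1 T, g t * (x t - xstar) =
      ε - KT.wealth ε c x T + KT.coinSum c T * xstar := by
    simp only [hcoin, hwealth, mul_sub, sum_sub_distrib, ← sum_mul]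
    ring
  have hT₀ : (0 : ℝ) < T := by exact_mod_cast hT
  calc f (1 / T * ∑ t ∈ Icc 1 T, x t) - f xstar
      ≤ 1 / T * ∑ t ∈ Icc 1 T, g t * (x t - xstar) := by
        simpa using hf.map_average_sub_le (nonempty_Icc.mpr hT) hg xstar
    _ ≤ 1 / T * (4 * |xstar| * √(T * log (1 + 24 * T ^ 2 * xstar ^ 2 / ε ^ 2)) + 2 * ε * √T) := by
        rw [hregret]
        exact mul_le_mul_of_nonneg_left (sub_add_mul_le_of_exp_le hε (by exact_mod_cast hT)
          (KT.abs_coinSum_le hc) hW xstar) (by positivity)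
    _ ≤ 4 * (|xstar| * √(log (1 + 24 * T ^ 2 * xstar ^ 2 / ε ^ 2)) + ε) / √T := by
        rw [sqrt_mul hT₀.le]
        calc _ = √T / T * (4 * |xstar| * √(log (1 + 24 * T ^ 2 * xstar ^ 2 / ε ^ 2)) + 2 * ε) := by
              ring
          _ = (4 * |xstar| * √(log (1 + 24 * T ^ 2 * xstar ^ 2 / ε ^ 2)) + 2 * ε) / √T := by
              rw [sqrt_div_self']; ring
          _ ≤ _ := by gcongr; linarith
end
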